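/- arXiv:2605.21934 — 3 statements merged into one kernel-verified Lean document; each statement's English description precedes it below -/
import Mathlib

section
/- Let F be an absolutely continuous CDF with density f such that the hazard rate h(x) = f(x)/(1 - F(x)) is non-decreasing (MHR), on an interval where 0 < F(x) < 1. Then for any n ≥ 1, the CDF Fⁿ (of the maximum of n i.i.d. draws from F) is also MHR; that is, its hazard rate h_n(x) = n F(x)^{n-1} f(x) / (1 - F(x)^n) is non-decreasing. -/
/-- If F is a CDF with density f whose hazard rate
h(x) = f(x)/(1-F(x)) is non-decreasing on a set where 0 < F < 1 (MHR), then
for any n ≥ 1 the CDF Fⁿ is also MHR: its hazard rate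
h_n(x) = n F(x)^{n-1} f(x)/(1 - F(x)^n) is non-decreasing there. -/
theorem stmt_8 (F f : ℝ → ℝ) (s : Set ℝ)
    (hFmono : MonotoneOn F s)
    (hf : ∀ x ∈ s, 0 ≤ f x)
    (hF0 : ∀ x ∈ s, 0 < F x) (hF1 : ∀ x ∈ s, F x < 1)
    (hMHR : MonotoneOn (fun x => f x / (1 - F x)) s)
    (n : ℕ) (hn : 1 ≤ n) :
    MonotoneOn (fun x => n * F x ^ (n - 1) * f x / (1 - F x ^ n)) s := by
  intro x hx y hy hxy
  simp only
  set a := F x with ha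
  set b := F y with hb
  have ha0 : 0 < a := hF0 x hx
  have hb0 : 0 < b := hF0 y hy
  have ha1 : a < 1 := hF1 x hx
  have hb1 : b < 1 := hF1 y hy
  have hab : a ≤ b := hFmono hx hy hxy
  have hfx : 0 ≤ f x := hf x hx
  have hfy : 0 ≤ f y := hf y hy
  have hh : f x / (1 - a) ≤ f y / (1 - b) := hMHR hx hy hxy
  set Sa := ∑ k ∈ Finset.range n, a ^ k with hSa
  set Sb := ∑ k ∈ Finset.range n, b ^ k with hSb
  have hne : (Finset.range n).Nonempty := by
    rw [Finset.nonempty_range_iff]; omega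
  have hSa0 : 0 < Sa := Finset.sum_pos (fun k _ => pow_pos ha0 k) hne
  have hSb0 : 0 < Sb := Finset.sum_pos (fun k _ => pow_pos hb0 k) hne
  have hga : 1 - a ^ n = (1 - a) * Sa := by
    have := geom_sum_mul a n
    rw [hSa]; nlinarith [this]
  have hgb : 1 - b ^ n = (1 - b) * Sb := by
    have := geom_sum_mul b n
    rw [hSb]; nlinarith [this]
  -- key: n * a^(n-1) * Sb ≤ n * b^(n-1) * Sa
  have key : (n : ℝ) * a ^ (n - 1) * Sb ≤ (n : ℝ) * b ^ (n - 1) * Sa := by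
    rw [hSa, hSb, Finset.mul_sum, Finset.mul_sum]
    apply Finset.sum_le_sum
    intro k hk
    have hkn : k ≤ n - 1 := by
      have := Finset.mem_range.mp hk; omega
    have hsplit : n - 1 = (n - 1 - k) + k := by omega
    have h1 : a ^ (n - 1 - k) ≤ b ^ (n - 1 - k) := pow_le_pow_left₀ ha0.le hab _
    have hea : a ^ (n - 1) = a ^ (n - 1 - k) * a ^ k := by
      rw [← pow_add, Nat.sub_add_cancel hkn]
    have heb : b ^ (n - 1) = b ^ (n - 1 - k) * b ^ k := by
      rw [← pow_add, Nat.sub_add_cancel hkn]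
    have hmain : a ^ (n - 1) * b ^ k ≤ b ^ (n - 1) * a ^ k := by
      rw [hea, heb]
      calc a ^ (n - 1 - k) * a ^ k * b ^ k = a ^ (n - 1 - k) * (a ^ k * b ^ k) := by ring
        _ ≤ b ^ (n - 1 - k) * (a ^ k * b ^ k) := by
            apply mul_le_mul_of_nonneg_right h1 (by positivity)
        _ = b ^ (n - 1 - k) * b ^ k * a ^ k := by ring
    have hn0 : (0:ℝ) ≤ (n:ℝ) := by positivity
    nlinarith [hmain]
  have hh' : f x * (1 - b) ≤ f y * (1 - a) := by
    rw [div_le_div_iff₀ (by linarith) (by linarith)] at hh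
    linarith
  have hpa : (0:ℝ) < (1 - a) * Sa := mul_pos (by linarith) hSa0
  have hpb : (0:ℝ) < (1 - b) * Sb := mul_pos (by linarith) hSb0
  rw [hga, hgb, div_le_div_iff₀ hpa hpb]
  have hprod := mul_le_mul key hh' (by nlinarith) (by positivity)
  nlinarith [hprod]
end

section
/- Fix n ≥ 1, continuous distributions F₁,…,Fₙ, and c ∈ (0,1]. Suppose for each i and each p in the support of Fᵢ, 1 - Fᵢ(ψᵢ(p)) ≥ c·(1 - Fᵢ(p)) for some function ψᵢ with ψᵢ(p) ≥ p. Then for any price p₀ > 0: Σ_{i=1}^n (1 - Fᵢ(ψᵢ(p₀))) Π_{j<i} Fⱼ(ψⱼ(p₀)) ≥ c · Σ_{i=1}^n (1 - Fᵢ(p₀)) Π_{j<i} Fⱼ(p₀). -/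
/-- If each CDF Fᵢ satisfies 1 - Fᵢ(ψᵢ(p)) ≥ c·(1 - Fᵢ(p)) with
ψᵢ(p) ≥ p, then for any p₀ > 0,
Σᵢ (1 - Fᵢ(ψᵢ(p₀))) Π_{j<i} Fⱼ(ψⱼ(p₀)) ≥ c · Σᵢ (1 - Fᵢ p₀) Π_{j<i} Fⱼ(p₀). -/
theorem stmt_12 (n : ℕ) (hn : 1 ≤ n) (F ψ : Fin n → ℝ → ℝ) (c : ℝ)
    (hc0 : 0 < c) (hc1 : c ≤ 1)
    (hFmono : ∀ i, Monotone (F i))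
    (hF0 : ∀ i x, 0 ≤ F i x) (hF1 : ∀ i x, F i x ≤ 1)
    (hψ : ∀ i p, p ≤ ψ i p)
    (hkey : ∀ i p, 1 - F i (ψ i p) ≥ c * (1 - F i p)) :
    ∀ p₀ : ℝ, 0 < p₀ →
      ∑ i, (1 - F i (ψ i p₀)) * ∏ j ∈ Finset.univ.filter (· < i), F j (ψ j p₀) ≥
        c * ∑ i, (1 - F i p₀) * ∏ j ∈ Finset.univ.filter (· < i), F j p₀ := by
  intro p₀ hp₀
  rw [ge_iff_le, Finset.mul_sum]
  apply Finset.sum_le_sum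
  intro i _
  rw [← mul_assoc]
  apply mul_le_mul (hkey i p₀)
  · exact Finset.prod_le_prod (fun j _ => hF0 j p₀)
      (fun j _ => hFmono j (hψ j p₀))
  · exact Finset.prod_nonneg (fun j _ => hF0 j p₀)
  · linarith [hkey i p₀, hF1 i (ψ i p₀), mul_nonneg hc0.le (sub_nonneg.2 (hF1 i p₀))]
end

section
/- Let m ≥ 1 and consider a menu {(αⱼ, βⱼ)}_{j∈[m]} with αⱼ ∈ [0,1], βⱼ ≥ 0, and a nonnegative random variable V. Define the randomized-menu revenue R_menu = E[ β_{j*(V)} · 1[α_{j*(V)} V - β_{j*(V)} ≥ 0] ] where j*(v) = argmax_j (αⱼ v - βⱼ). Then R_menu ≤ sup_{p ≥ 0} p · Pr[V ≥ p]. -/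
open MeasureTheory

namespace Stmt17Aux

noncomputable section

/-- weighted sum of active prices -/
def SW (F : List (ℝ × ℝ)) (v : ℝ) : ℝ :=
  (F.map (fun x => if x.2 ≤ v then x.1 * x.2 else 0)).sum

def SC (F : List (ℝ × ℝ)) (v : ℝ) : ℝ :=
  (F.map (fun x => if x.2 ≤ v then x.1 * (v - x.2) else 0)).sum

def SWt (F : List (ℝ × ℝ)) : ℝ := (F.map Prod.fst).sum

@[simp] lemma SW_nil (v : ℝ) : SW [] v = 0 := rfl
@[simp] lemma SC_nil (v : ℝ) : SC [] v = 0 := rfl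
@[simp] lemma SWt_nil : SWt [] = 0 := rfl
@[simp] lemma SW_cons (x : ℝ × ℝ) (F : List (ℝ × ℝ)) (v : ℝ) :
    SW (x :: F) v = (if x.2 ≤ v then x.1 * x.2 else 0) + SW F v := by simp [SW]
@[simp] lemma SC_cons (x : ℝ × ℝ) (F : List (ℝ × ℝ)) (v : ℝ) :
    SC (x :: F) v = (if x.2 ≤ v then x.1 * (v - x.2) else 0) + SC F v := by simp [SC]
@[simp] lemma SWt_cons (x : ℝ × ℝ) (F : List (ℝ × ℝ)) :
    SWt (x :: F) = x.1 + SWt F := by simp [SWt]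

lemma SW_nonneg {F : List (ℝ × ℝ)} (h : ∀ x ∈ F, 0 ≤ x.1 ∧ 0 ≤ x.2) (v : ℝ) :
    0 ≤ SW F v := by
  induction F with
  | nil => simp
  | cons x F ih =>
    have hx := h x (by simp)
    have hF := ih (fun y hy => h y (by simp [hy]))
    have h1 : (0:ℝ) ≤ if x.2 ≤ v then x.1 * x.2 else 0 := by
      split
      · exact mul_nonneg hx.1 hx.2
      · exact le_refl 0
    simp only [SW_cons]
    linarith

lemma SWt_nonneg {F : List (ℝ × ℝ)} (h : ∀ x ∈ F, 0 ≤ x.1) : 0 ≤ SWt F := by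
  induction F with
  | nil => simp
  | cons x F ih =>
    have hx := h x (by simp)
    have hF := ih (fun y hy => h y (by simp [hy]))
    simp only [SWt_cons]; linarith

lemma SWt_filter_le {F : List (ℝ × ℝ)} (h : ∀ x ∈ F, 0 ≤ x.1) (p : ℝ × ℝ → Bool) :
    SWt (F.filter p) ≤ SWt F := by
  induction F with
  | nil => simp
  | cons x F ih =>
    have hx := h x (by simp)
    have hF := ih (fun y hy => h y (by simp [hy]))
    by_cases hp : p x
    · simp only [List.filter_cons, hp, if_true, SWt_cons]; linarith
    · simp only [List.filter_cons, hp, if_false, SWt_cons, Bool.false_eq_true]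
      linarith

lemma SW_filter_lt (F : List (ℝ × ℝ)) {v q : ℝ} (hvq : v < q) :
    SW (F.filter fun x => decide (x.2 < q)) v = SW F v := by
  induction F with
  | nil => simp
  | cons x F ih =>
    by_cases hp : x.2 < q
    · simp only [List.filter_cons, hp, decide_eq_true_eq, if_true, SW_cons, ih]
    · have hxv : ¬ x.2 ≤ v := fun hc => hp (lt_of_le_of_lt hc hvq)
      simp only [List.filter_cons, hp, decide_eq_true_eq, if_false, SW_cons, ih, hxv]
      simp

lemma SC_filter_lt (F : List (ℝ × ℝ)) {v q : ℝ} (hvq : v < q) :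
    SC (F.filter fun x => decide (x.2 < q)) v = SC F v := by
  induction F with
  | nil => simp
  | cons x F ih =>
    by_cases hp : x.2 < q
    · simp only [List.filter_cons, hp, decide_eq_true_eq, if_true, SC_cons, ih]
    · have hxv : ¬ x.2 ≤ v := fun hc => hp (lt_of_le_of_lt hc hvq)
      simp only [List.filter_cons, hp, decide_eq_true_eq, if_false, SC_cons, ih, hxv]
      simp

lemma SC_filter_self (F : List (ℝ × ℝ)) (q : ℝ) :
    SC (F.filter fun x => decide (x.2 < q)) q = SC F q := by
  induction F with
  | nil => simp
  | cons x F ih =>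
    by_cases hp : x.2 < q
    · simp only [List.filter_cons, hp, decide_eq_true_eq, if_true, SC_cons, ih]
    · have hq : q ≤ x.2 := not_lt.1 hp
      have : (if x.2 ≤ q then x.1 * (q - x.2) else 0) = 0 := by
        split
        · have hxq : x.2 = q := le_antisymm (by assumption) hq
          rw [hxq]; ring
        · rfl
      simp only [List.filter_cons, hp, decide_eq_true_eq, if_false, SC_cons, ih, this]
      simp

lemma SW_all_le {F : List (ℝ × ℝ)} {q v : ℝ} (h : ∀ x ∈ F, x.2 ≤ q) (hqv : q ≤ v) :
    SW F v = SW F q := by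
  induction F with
  | nil => simp
  | cons x F ih =>
    have hx := h x (by simp)
    have hF := ih (fun y hy => h y (by simp [hy]))
    simp only [SW_cons, hF, if_pos hx, if_pos (hx.trans hqv)]

lemma SC_shift {F : List (ℝ × ℝ)} {q v : ℝ} (h : ∀ x ∈ F, x.2 ≤ q) (hqv : q ≤ v) :
    SC F v = SC F q + SWt F * (v - q) := by
  induction F with
  | nil => simp
  | cons x F ih =>
    have hx := h x (by simp)
    have hF := ih (fun y hy => h y (by simp [hy]))
    simp only [SC_cons, SWt_cons, hF, if_pos hx, if_pos (hx.trans hqv)]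
    ring

lemma SC_eq_of_all_le {F : List (ℝ × ℝ)} {q : ℝ} (h : ∀ x ∈ F, x.2 ≤ q) :
    SC F q = SWt F * q - SW F q := by
  induction F with
  | nil => simp
  | cons x F ih =>
    have hx := h x (by simp)
    have hF := ih (fun y hy => h y (by simp [hy]))
    simp only [SC_cons, SWt_cons, SW_cons, hF, if_pos hx]
    ring

lemma exists_decomp {m : ℕ} (a b : Fin m → ℝ)
    (ha : ∀ j, 0 ≤ a j ∧ a j ≤ 1) (hb : ∀ j, 0 ≤ b j) (s : Finset (Fin m)) :
    ∀ hs : s.Nonempty,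
    ∃ F : List (ℝ × ℝ),
      (∀ x ∈ F, 0 ≤ x.1 ∧ 0 < x.2) ∧
      SWt F ≤ s.sup' hs a ∧
      (∀ v, 0 ≤ v → ∀ j ∈ s,
        (∀ i ∈ s, a i * v - b i ≤ a j * v - b j) → 0 ≤ a j * v - b j →
        b j ≤ SW F v) ∧
      (∀ v, 0 ≤ v → ∀ z, 0 ≤ z → (∀ i ∈ s, a i * v - b i ≤ z) → SC F v ≤ z) := by
  induction s using Finset.strongInductionOn with
  | _ s IH =>
  intro hs
  obtain ⟨k, hk, hkmax⟩ := s.exists_max_image a hs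
  set s' := s.erase k with hs'def
  have hs'sub : ∀ i ∈ s', i ∈ s := fun i hi => Finset.mem_of_mem_erase hi
  -- get the old family
  obtain ⟨F0, P1, P2, P3, P4⟩ :
      ∃ F0 : List (ℝ × ℝ),
        (∀ x ∈ F0, 0 ≤ x.1 ∧ 0 < x.2) ∧
        SWt F0 ≤ a k ∧
        (∀ v, 0 ≤ v → ∀ j ∈ s',
          (∀ i ∈ s', a i * v - b i ≤ a j * v - b j) → 0 ≤ a j * v - b j →
          b j ≤ SW F0 v) ∧
        (∀ v, 0 ≤ v → ∀ z, 0 ≤ z → (∀ i ∈ s', a i * v - b i ≤ z) → SC F0 v ≤ z) := by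
    rcases s'.eq_empty_or_nonempty with he | hne
    · refine ⟨[], by simp, by simpa using (ha k).1, ?_, ?_⟩
      · intro v _ j hj; rw [he] at hj; simp at hj
      · intro v _ z hz _; simpa using hz
    · obtain ⟨F0, Q1, Q2, Q3, Q4⟩ := IH s' (Finset.erase_ssubset hk) hne
      refine ⟨F0, Q1, ?_, Q3, Q4⟩
      refine Q2.trans (Finset.sup'_le hne a (fun j hj => hkmax j (hs'sub j hj)))
  -- the set where item k is the global (accepted) winner
  set G : Set ℝ :=
    {v | 0 ≤ v ∧ 0 ≤ a k * v - b k ∧ ∀ j ∈ s', a j * v - b j ≤ a k * v - b k}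
    with hGdef
  have hGup : ∀ v ∈ G, ∀ v', v ≤ v' → v' ∈ G := by
    intro v hv v' hvv'
    obtain ⟨hv0, hvk, hvj⟩ := hv
    refine ⟨hv0.trans hvv', ?_, ?_⟩
    · nlinarith [(ha k).1]
    · intro j hj
      have h1 := hvj j hj
      have h2 : a j * (v' - v) ≤ a k * (v' - v) :=
        mul_le_mul_of_nonneg_right (hkmax j (hs'sub j hj)) (by linarith)
      nlinarith
  by_cases hG : G.Nonempty ∧ 0 < b k
  swap
  · -- no new item needed
    refine ⟨F0, P1, P2.trans (Finset.le_sup' a hk), ?_, ?_⟩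
    · intro v hv j hj hjmax hjacc
      by_cases hvG : v ∈ G
      · -- b j ≤ b k = 0
        have hbk0 : b k = 0 := by
          have : ¬ (0 < b k) := fun hc => hG ⟨⟨v, hvG⟩, hc⟩
          linarith [hb k]
        have hbjk : b j ≤ b k := by
          by_cases hjk : j = k
          · rw [hjk]
          · have hj' : j ∈ s' := Finset.mem_erase.2 ⟨hjk, hj⟩
            have h1 : a j * v - b j ≤ a k * v - b k := hvG.2.2 j hj'
            have h2 : a k * v - b k ≤ a j * v - b j := hjmax k hk
            have h3 : a j * v ≤ a k * v :=
              mul_le_mul_of_nonneg_right (hkmax j hj) hv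
            linarith
        have := SW_nonneg (fun x hx => ⟨(P1 x hx).1, (P1 x hx).2.le⟩) v
        linarith
      · -- j must be an argmax of s'
        have hjk : j ≠ k := by
          intro hjk; subst hjk
          exact hvG ⟨hv, hjacc, fun i hi => hjmax i (hs'sub i hi)⟩
        exact P3 v hv j (Finset.mem_erase.2 ⟨hjk, hj⟩)
          (fun i hi => hjmax i (hs'sub i hi)) hjacc
    · intro v hv z hz hzl
      exact P4 v hv z hz (fun i hi => hzl i (hs'sub i hi))
  · obtain ⟨hGne, hbk⟩ := hG
    have hGbdd : BddBelow G := ⟨0, fun v hv => hv.1⟩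
    have hGclosed : IsClosed G := by
      have : G = {v : ℝ | 0 ≤ v} ∩ ({v : ℝ | 0 ≤ a k * v - b k} ∩
          ⋂ j ∈ s', {v : ℝ | a j * v - b j ≤ a k * v - b k}) := by
        ext v
        simp only [hGdef, Set.mem_setOf_eq, Set.mem_inter_iff, Set.mem_iInter]
      rw [this]
      refine (isClosed_le continuous_const continuous_id).inter
        ((isClosed_le continuous_const (by fun_prop)).inter
          (isClosed_biInter (fun j hj => isClosed_le (by fun_prop) (by fun_prop))))
    set q := sInf G with hqdef
    have hqG : q ∈ G := hGclosed.csInf_mem hGne hGbdd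
    have hq0 : 0 ≤ q := hqG.1
    have hqk : 0 ≤ a k * q - b k := hqG.2.1
    have hakpos : 0 < a k := by nlinarith [(ha k).1, (ha k).2]
    have hqpos : 0 < q := by nlinarith [(ha k).2]
    have hGq : ∀ v ∈ G, q ≤ v := fun v hv => csInf_le hGbdd hv
    have hqmem : ∀ v, q ≤ v → v ∈ G := fun v h => hGup q hqG v h
    set Fq := F0.filter (fun x => decide (x.2 < q)) with hFqdef
    have hFq_mem : ∀ x ∈ Fq, x ∈ F0 ∧ x.2 < q := by
      intro x hx
      rw [hFqdef, List.mem_filter] at hx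
      exact ⟨hx.1, by simpa using hx.2⟩
    have P1q : ∀ x ∈ Fq, 0 ≤ x.1 ∧ 0 < x.2 := fun x hx => P1 x (hFq_mem x hx).1
    have hFq_le : ∀ x ∈ Fq, x.2 ≤ q := fun x hx => (hFq_mem x hx).2.le
    set wk := a k - SWt Fq with hwkdef
    have hSWtFq : SWt Fq ≤ SWt F0 :=
      SWt_filter_le (fun x hx => (P1 x hx).1) _
    have hwk : 0 ≤ wk := by rw [hwkdef]; linarith
    -- the key estimate at q
    have hkey : SC F0 q ≤ a k * q - b k :=
      P4 q hq0 _ hqk (fun i hi => hqG.2.2 i hi)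
    have hSCq : SC Fq q = SC F0 q := SC_filter_self F0 q
    have hSCW : SC Fq q = SWt Fq * q - SW Fq q := SC_eq_of_all_le hFq_le
    refine ⟨(wk, q) :: Fq, ?_, ?_, ?_, ?_⟩
    · intro x hx
      rcases List.mem_cons.1 hx with h | h
      · rw [h]; exact ⟨hwk, hqpos⟩
      · exact P1q x h
    · have : SWt ((wk, q) :: Fq) = a k := by
        simp only [SWt_cons, hwkdef]; ring
      rw [this]
      exact Finset.le_sup' a hk
    · intro v hv j hj hjmax hjacc
      by_cases hvG : v ∈ G
      · have hqv : q ≤ v := hGq v hvG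
        have hbjk : b j ≤ b k := by
          by_cases hjk : j = k
          · rw [hjk]
          · have hj' : j ∈ s' := Finset.mem_erase.2 ⟨hjk, hj⟩
            have h1 : a j * v - b j ≤ a k * v - b k := hvG.2.2 j hj'
            have h2 : a k * v - b k ≤ a j * v - b j := hjmax k hk
            have h3 : a j * v ≤ a k * v :=
              mul_le_mul_of_nonneg_right (hkmax j hj) hv
            linarith
        have hSWv : SW Fq v = SW Fq q := SW_all_le hFq_le hqv
        have : SW ((wk, q) :: Fq) v = wk * q + SW Fq q := by
          simp only [SW_cons, if_pos hqv, hSWv]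
        rw [this, hwkdef]
        -- a k * q - SC F0 q ≥ b k
        linarith [hSCq, hSCW, hkey]
      · have hvq : v < q := by
          by_contra hc
          exact hvG (hqmem v (not_lt.1 hc))
        have hjk : j ≠ k := by
          intro hjk; subst hjk
          exact hvG ⟨hv, hjacc, fun i hi => hjmax i (hs'sub i hi)⟩
        have hSWv : SW ((wk, q) :: Fq) v = SW F0 v := by
          simp only [SW_cons, if_neg (not_le.2 hvq), SW_filter_lt F0 hvq, zero_add]
          exact SW_filter_lt F0 hvq
        rw [hSWv]
        exact P3 v hv j (Finset.mem_erase.2 ⟨hjk, hj⟩)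
          (fun i hi => hjmax i (hs'sub i hi)) hjacc
    · intro v hv z hz hzl
      by_cases hqv : q ≤ v
      · have hSCv : SC Fq v = SC Fq q + SWt Fq * (v - q) := SC_shift hFq_le hqv
        have h1 : SC ((wk, q) :: Fq) v = wk * (v - q) + SC Fq v := by
          simp only [SC_cons, if_pos hqv]
        have hzk : a k * v - b k ≤ z := hzl k hk
        rw [h1, hSCv, hwkdef]
        linarith [hSCq, hkey]
      · have hvq : v < q := not_le.1 hqv
        have h1 : SC ((wk, q) :: Fq) v = SC F0 v := by
          simp only [SC_cons, if_neg hqv, SC_filter_lt F0 hvq, zero_add]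
          exact SC_filter_lt F0 hvq
        rw [h1]
        exact P4 v hv z hz (fun i hi => hzl i (hs'sub i hi))

lemma lint_bound {Ω : Type*} [MeasurableSpace Ω] (μ : Measure Ω) (V : Ω → ℝ) :
    ∀ F : List (ℝ × ℝ), (∀ x ∈ F, 0 ≤ x.1 ∧ 0 < x.2) →
    ∫⁻ ω, ENNReal.ofReal (SW F (V ω)) ∂μ ≤
      ENNReal.ofReal (SWt F) * ⨆ p : ℝ, ENNReal.ofReal p * μ {ω | p ≤ V ω} := by
  intro F
  induction F with
  | nil => intro _; simp
  | cons x F ih =>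
    intro h
    have hx := h x (by simp)
    have hF : ∀ y ∈ F, 0 ≤ y.1 ∧ 0 < y.2 := fun y hy => h y (by simp [hy])
    set R := ⨆ p : ℝ, ENNReal.ofReal p * μ {ω | p ≤ V ω} with hRdef
    set S := {ω | x.2 ≤ V ω} with hSdef
    set T := toMeasurable μ S with hTdef
    have hTmeas : MeasurableSet T := measurableSet_toMeasurable μ S
    set g : Ω → ENNReal := T.indicator (fun _ => ENNReal.ofReal (x.1 * x.2))
      with hgdef
    have hgmeas : Measurable g := measurable_const.indicator hTmeas
    have hpt : ∀ ω, ENNReal.ofReal (SW (x :: F) (V ω)) ≤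
        g ω + ENNReal.ofReal (SW F (V ω)) := by
      intro ω
      rw [SW_cons]
      refine (ENNReal.ofReal_add_le).trans (add_le_add ?_ le_rfl)
      by_cases hm : x.2 ≤ V ω
      · have hωT : ω ∈ T := subset_toMeasurable μ S hm
        rw [if_pos hm, hgdef, Set.indicator_of_mem hωT]
      · rw [if_neg hm]
        simp
    calc ∫⁻ ω, ENNReal.ofReal (SW (x :: F) (V ω)) ∂μ
        ≤ ∫⁻ ω, (g ω + ENNReal.ofReal (SW F (V ω))) ∂μ := lintegral_mono hpt
      _ = ∫⁻ ω, g ω ∂μ + ∫⁻ ω, ENNReal.ofReal (SW F (V ω)) ∂μ :=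
          lintegral_add_left hgmeas _
      _ ≤ ENNReal.ofReal x.1 * R + ENNReal.ofReal (SWt F) * R := by
          refine add_le_add ?_ (ih hF)
          have h1 : ∫⁻ ω, g ω ∂μ = ENNReal.ofReal (x.1 * x.2) * μ T := by
            simp only [hgdef]
            exact lintegral_indicator_const hTmeas _
          rw [h1, hTdef, measure_toMeasurable,
            ENNReal.ofReal_mul hx.1, mul_assoc]
          refine mul_le_mul_right ?_ _
          exact le_iSup (fun p : ℝ => ENNReal.ofReal p * μ {ω | p ≤ V ω}) x.2
      _ = ENNReal.ofReal (SWt (x :: F)) * R := by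
          rw [SWt_cons, ENNReal.ofReal_add hx.1 (SWt_nonneg (fun y hy => (hF y hy).1)),
            add_mul]

end

end Stmt17Aux


open Stmt17Aux in
/-- For a menu {(αⱼ,βⱼ)} with αⱼ ∈ [0,1], βⱼ ≥ 0, and a
nonnegative random variable V, the randomized-menu revenue
E[β_{j*(V)} · 1[α_{j*(V)} V - β_{j*(V)} ≥ 0]], where j*(v) maximizes
αⱼ v - βⱼ, is at most sup_{p ≥ 0} p · Pr[V ≥ p]. -/
theorem stmt_17 {Ω : Type*} [MeasurableSpace Ω] (μ : Measure Ω)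
    [IsProbabilityMeasure μ]
    (m : ℕ) (hm : 1 ≤ m) (a b : Fin m → ℝ)
    (ha : ∀ j, 0 ≤ a j ∧ a j ≤ 1) (hb : ∀ j, 0 ≤ b j)
    (V : Ω → ℝ) (hV : ∀ ω, 0 ≤ V ω)
    (jstar : ℝ → Fin m)
    (hjs : ∀ v j, a j * v - b j ≤ a (jstar v) * v - b (jstar v)) :
    (∫⁻ ω, ENNReal.ofReal
        (b (jstar (V ω)) *
          (if 0 ≤ a (jstar (V ω)) * V ω - b (jstar (V ω)) then 1 else 0)) ∂μ)
      ≤ ⨆ p : ℝ, ENNReal.ofReal p * μ {ω | p ≤ V ω} := by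
  have huniv : (Finset.univ : Finset (Fin m)).Nonempty :=
    ⟨⟨0, hm⟩, Finset.mem_univ _⟩
  obtain ⟨F, hF1, hF2, hF3, hF4⟩ := exists_decomp a b ha hb Finset.univ huniv
  have hpt : ∀ ω, ENNReal.ofReal
      (b (jstar (V ω)) *
        (if 0 ≤ a (jstar (V ω)) * V ω - b (jstar (V ω)) then 1 else 0)) ≤
      ENNReal.ofReal (SW F (V ω)) := by
    intro ω
    apply ENNReal.ofReal_le_ofReal
    by_cases hacc : 0 ≤ a (jstar (V ω)) * V ω - b (jstar (V ω))
    · rw [if_pos hacc, mul_one]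
      exact hF3 (V ω) (hV ω) (jstar (V ω)) (Finset.mem_univ _)
        (fun i _ => hjs (V ω) i) hacc
    · rw [if_neg hacc, mul_zero]
      exact SW_nonneg (fun x hx => ⟨(hF1 x hx).1, (hF1 x hx).2.le⟩) (V ω)
  calc (∫⁻ ω, ENNReal.ofReal
        (b (jstar (V ω)) *
          (if 0 ≤ a (jstar (V ω)) * V ω - b (jstar (V ω)) then 1 else 0)) ∂μ)
      ≤ ∫⁻ ω, ENNReal.ofReal (SW F (V ω)) ∂μ := lintegral_mono hpt
    _ ≤ ENNReal.ofReal (SWt F) * ⨆ p : ℝ, ENNReal.ofReal p * μ {ω | p ≤ V ω} :=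
        lint_bound μ V F hF1
    _ ≤ 1 * ⨆ p : ℝ, ENNReal.ofReal p * μ {ω | p ≤ V ω} := by
        refine mul_le_mul_left ?_ _
        refine ENNReal.ofReal_le_one.2 ?_
        exact hF2.trans (Finset.sup'_le huniv a fun j _ => (ha j).2)
    _ = ⨆ p : ℝ, ENNReal.ofReal p * μ {ω | p ≤ V ω} := one_mul _
end
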